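/- Let H be a complex Hilbert space and X, Y, Z, W : H → H bounded linear operators. Let T be the operator matrix on H ⊕ H given by T(x₁, x₂) = (X x₁ + Y x₂, Z x₁ + W x₂), and set S = Y*Y + ZZ*. Then w(T) ≤ max{w(X), w(W)} + ((1/16)‖S‖² + (1/4)w(ZY)² + (1/8)w(ZYS + S(ZY)))^{1/4}. -/

import Mathlib

noncomputable def numRadius {H : Type*} [NormedAddCommGroup H] [InnerProductSpace ℂ H]
    (T : H →L[ℂ] H) : ℝ :=
  sSup {r : ℝ | ∃ x : H, ‖x‖ = 1 ∧ r = ‖(inner ℂ (T x) x : ℂ)‖}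

/-!
For a unit vector `x = (x₁, x₂)`, `⟪T x, x⟫` is the diagonal part `⟪X x₁, x₁⟫ + ⟪W x₂, x₂⟫`, at most
`max (w X) (w W)` because `‖x₁‖² + ‖x₂‖² = 1`, plus the off-diagonal part `⟪Y x₂, x₁⟫ + ⟪Z x₁, x₂⟫`.
Rotating the two off-diagonal terms by unimodular scalars makes the sum of their moduli equal to
`⟪F x₂, x₁⟫` with `F = a Y + b Z*`, and `F* F = S + R` with `R = c ZY + c̄ (ZY)*` self-adjoint,
`|c| = 1`. Hence `‖F x₂‖⁴ ≤ ‖(S + R) x₂‖² ‖x₂‖²`, and in the expansion of `‖(S + R) x₂‖²` we have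
`‖R‖ = w(R) ≤ 2 w(ZY)` while the cross term `2 Re ⟪S x₂, R x₂⟫` is the real part of
`2 c̄ ⟪(ZYS + SZY) x₂, x₂⟫`. The factor `1/16` comes from `‖x₁‖² ‖x₂‖² ≤ 1/4`.
-/

open ComplexConjugate ContinuousLinearMap
open scoped InnerProductSpace

section NumRadius

variable {H : Type*} [NormedAddCommGroup H] [InnerProductSpace ℂ H]

lemma numRadius_bddAbove (T : H →L[ℂ] H) :
    BddAbove {r : ℝ | ∃ x : H, ‖x‖ = 1 ∧ r = ‖⟪T x, x⟫_ℂ‖} := by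
  refine ⟨‖T‖, ?_⟩
  rintro _ ⟨x, hx, rfl⟩
  calc ‖⟪T x, x⟫_ℂ‖ ≤ ‖T x‖ * ‖x‖ := norm_inner_le_norm _ _
    _ ≤ ‖T‖ * ‖x‖ * ‖x‖ := by gcongr; exact T.le_opNorm x
    _ = ‖T‖ := by rw [hx, mul_one, mul_one]

lemma numRadius_nonneg (T : H →L[ℂ] H) : 0 ≤ numRadius T :=
  Real.sSup_nonneg fun _ ⟨_, _, hr⟩ ↦ hr ▸ norm_nonneg _

lemma norm_inner_self_le_numRadius (T : H →L[ℂ] H) (x : H) :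
    ‖⟪T x, x⟫_ℂ‖ ≤ numRadius T * ‖x‖ ^ 2 := by
  obtain rfl | hx := eq_or_ne x 0
  · simp
  have hx' : ‖x‖ ≠ 0 := norm_ne_zero_iff.mpr hx
  set y := ((‖x‖⁻¹ : ℝ) : ℂ) • x
  have hy : ‖y‖ = 1 := by simp [y, norm_smul, hx']
  have hTy : ‖⟪T y, y⟫_ℂ‖ = ‖⟪T x, x⟫_ℂ‖ / ‖x‖ ^ 2 := by
    simp [y]
    field_simp
  have := le_csSup (numRadius_bddAbove T) ⟨y, hy, rfl⟩
  rwa [hTy, div_le_iff₀ (by positivity)] at this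

lemma numRadius_le {T : H →L[ℂ] H} {c : ℝ} (hc : 0 ≤ c)
    (h : ∀ x : H, ‖x‖ = 1 → ‖⟪T x, x⟫_ℂ‖ ≤ c) : numRadius T ≤ c :=
  Real.sSup_le (fun _ ⟨x, hx, hr⟩ ↦ hr ▸ h x hx) hc

lemma numRadius_add_le (A B : H →L[ℂ] H) : numRadius (A + B) ≤ numRadius A + numRadius B := by
  refine numRadius_le (add_nonneg (numRadius_nonneg A) (numRadius_nonneg B)) fun x hx ↦ ?_
  calc ‖⟪(A + B) x, x⟫_ℂ‖ ≤ ‖⟪A x, x⟫_ℂ‖ + ‖⟪B x, x⟫_ℂ‖ := by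
        rw [add_apply, inner_add_left]; exact norm_add_le _ _
    _ ≤ numRadius A + numRadius B := by
        simpa [hx] using add_le_add (norm_inner_self_le_numRadius A x)
          (norm_inner_self_le_numRadius B x)

lemma numRadius_smul_le (c : ℂ) (A : H →L[ℂ] H) : numRadius (c • A) ≤ ‖c‖ * numRadius A := by
  refine numRadius_le (mul_nonneg (norm_nonneg c) (numRadius_nonneg A)) fun x hx ↦ ?_
  rw [smul_apply, inner_smul_left, norm_mul, RCLike.norm_conj]
  gcongr
  simpa [hx] using norm_inner_self_le_numRadius A x

lemma numRadius_adjoint_le [CompleteSpace H] (A : H →L[ℂ] H) :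
    numRadius (adjoint A) ≤ numRadius A := by
  refine numRadius_le (numRadius_nonneg A) fun x hx ↦ ?_
  simpa [adjoint_inner_left, norm_inner_symm x, hx] using norm_inner_self_le_numRadius A x

lemma IsSelfAdjoint.norm_le_numRadius [CompleteSpace H] {A : H →L[ℂ] H} (hA : IsSelfAdjoint A) :
    ‖A‖ ≤ numRadius A := by
  rw [A.norm_eq_iSup_rayleighQuotient hA.isSymmetric]
  refine ciSup_le fun x ↦ ?_
  obtain rfl | hx := eq_or_ne x 0
  · simpa using numRadius_nonneg A
  rw [rayleighQuotient, reApplyInnerSelf_apply, abs_div, abs_sq, div_le_iff₀ (by positivity)]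
  exact (RCLike.abs_re_le_norm _).trans (norm_inner_self_le_numRadius A x)

lemma norm_inner_add_inner_le_max (X W : H →L[ℂ] H) {x₁ x₂ : H} (hx : ‖x₁‖ ^ 2 + ‖x₂‖ ^ 2 = 1) :
    ‖⟪X x₁, x₁⟫_ℂ + ⟪W x₂, x₂⟫_ℂ‖ ≤ max (numRadius X) (numRadius W) := calc
  _ ≤ numRadius X * ‖x₁‖ ^ 2 + numRadius W * ‖x₂‖ ^ 2 :=
      (norm_add_le _ _).trans
        (add_le_add (norm_inner_self_le_numRadius X x₁) (norm_inner_self_le_numRadius W x₂))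
  _ ≤ max (numRadius X) (numRadius W) * ‖x₁‖ ^ 2 +
      max (numRadius X) (numRadius W) * ‖x₂‖ ^ 2 := by
      gcongr
      exacts [le_max_left _ _, le_max_right _ _]
  _ = max (numRadius X) (numRadius W) := by rw [← mul_add, hx, mul_one]

end NumRadius

section SelfAdjointPart

variable {H : Type*} [NormedAddCommGroup H] [InnerProductSpace ℂ H] [CompleteSpace H]

lemma isSelfAdjoint_smul_add_conj_smul_adjoint (c : ℂ) (P : H →L[ℂ] H) :
    IsSelfAdjoint (c • P + conj c • adjoint P) := by
  simpa [star_smul, star_eq_adjoint] using IsSelfAdjoint.add_star_self (c • P)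

lemma numRadius_smul_add_conj_smul_adjoint_le {c : ℂ} (hc : ‖c‖ = 1) (P : H →L[ℂ] H) :
    numRadius (c • P + conj c • adjoint P) ≤ 2 * numRadius P := by
  calc numRadius (c • P + conj c • adjoint P)
      ≤ ‖c‖ * numRadius P + ‖conj c‖ * numRadius (adjoint P) :=
        (numRadius_add_le _ _).trans (add_le_add (numRadius_smul_le _ _) (numRadius_smul_le _ _))
    _ ≤ 2 * numRadius P := by
        rw [RCLike.norm_conj, hc]; linarith [numRadius_adjoint_le P]

lemma re_inner_apply_smul_add_conj_smul_adjoint {S : H →L[ℂ] H} (hS : IsSelfAdjoint S)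
    (c : ℂ) (P : H →L[ℂ] H) (x : H) :
    RCLike.re ⟪S x, (c • P + conj c • adjoint P) x⟫_ℂ =
      RCLike.re (conj c * ⟪(P ∘L S + S ∘L P) x, x⟫_ℂ) := by
  have hSP : ⟪S x, P x⟫_ℂ = conj ⟪(S ∘L P) x, x⟫_ℂ := by
    rw [← adjoint_inner_right, hS.adjoint_eq, inner_conj_symm, comp_apply]
  have hSP' : ⟪S x, adjoint P x⟫_ℂ = ⟪(P ∘L S) x, x⟫_ℂ := by
    rw [← inner_conj_symm, adjoint_inner_left, inner_conj_symm, comp_apply]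
  simp only [add_apply, smul_apply, inner_add_right, inner_add_left, inner_smul_right, hSP, hSP',
    mul_add, map_add]
  rw [add_comm, ← RCLike.conj_re (c * _), map_mul (starRingEnd ℂ), RCLike.conj_conj]

lemma norm_add_smul_add_conj_smul_adjoint_apply_sq_le {S : H →L[ℂ] H} (hS : IsSelfAdjoint S)
    {c : ℂ} (hc : ‖c‖ = 1) (P : H →L[ℂ] H) (x : H) :
    ‖(S + (c • P + conj c • adjoint P)) x‖ ^ 2 ≤
      (‖S‖ ^ 2 + 4 * numRadius P ^ 2 + 2 * numRadius (P ∘L S + S ∘L P)) * ‖x‖ ^ 2 := by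
  set R := c • P + conj c • adjoint P
  have hSx : ‖S x‖ ≤ ‖S‖ * ‖x‖ := S.le_opNorm x
  have hRx : ‖R x‖ ≤ 2 * numRadius P * ‖x‖ :=
    (R.le_opNorm x).trans <| by
      gcongr
      exact ((isSelfAdjoint_smul_add_conj_smul_adjoint c P).norm_le_numRadius).trans
        (numRadius_smul_add_conj_smul_adjoint_le hc P)
  have hcross : RCLike.re ⟪S x, R x⟫_ℂ ≤ numRadius (P ∘L S + S ∘L P) * ‖x‖ ^ 2 := by
    rw [re_inner_apply_smul_add_conj_smul_adjoint hS]
    refine (RCLike.re_le_norm _).trans ?_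
    rw [norm_mul, RCLike.norm_conj, hc, one_mul]
    exact norm_inner_self_le_numRadius _ x
  rw [add_apply, norm_add_sq (𝕜 := ℂ)]
  linarith [pow_le_pow_left₀ (norm_nonneg _) hSx 2, pow_le_pow_left₀ (norm_nonneg _) hRx 2]

end SelfAdjointPart

section OffDiagonal

variable {H : Type*} [NormedAddCommGroup H] [InnerProductSpace ℂ H] [CompleteSpace H]

lemma adjoint_comp_self_smul_add_smul_adjoint {a b : ℂ} (ha : ‖a‖ = 1) (hb : ‖b‖ = 1)
    (Y Z : H →L[ℂ] H) :
    adjoint (a • Y + b • adjoint Z) ∘L (a • Y + b • adjoint Z) =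
      (adjoint Y ∘L Y + Z ∘L adjoint Z) +
        ((conj b * a) • (Z ∘L Y) + conj (conj b * a) • adjoint (Z ∘L Y)) := by
  have hadj : adjoint (a • Y + b • adjoint Z) = conj a • adjoint Y + conj b • Z := by
    simp [← star_eq_adjoint, star_smul]
  have ha' : conj a * a = 1 := by rw [Complex.conj_mul', ha]; norm_num
  have hb' : conj b * b = 1 := by rw [Complex.conj_mul', hb]; norm_num
  rw [hadj, adjoint_comp]
  simp only [add_comp, comp_add, smul_comp, comp_smul, map_mul, RCLike.conj_conj]
  linear_combination (norm := module) ha' • (adjoint Y ∘L Y) + hb' • (Z ∘L adjoint Z)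

lemma norm_inner_add_inner_pow_four_le (Y Z S : H →L[ℂ] H)
    (hS : S = adjoint Y ∘L Y + Z ∘L adjoint Z) (x₁ x₂ : H) :
    ‖⟪Y x₂, x₁⟫_ℂ + ⟪Z x₁, x₂⟫_ℂ‖ ^ 4 ≤
      (‖S‖ ^ 2 + 4 * numRadius (Z ∘L Y) ^ 2 + 2 * numRadius ((Z ∘L Y) ∘L S + S ∘L (Z ∘L Y))) *
        (‖x₁‖ ^ 2 * ‖x₂‖ ^ 2) ^ 2 := by
  obtain ⟨a, ha, hau⟩ := Complex.exists_norm_eq_mul_self ⟪Y x₂, x₁⟫_ℂ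
  obtain ⟨b, hb, hbv⟩ := Complex.exists_norm_eq_mul_self ⟪adjoint Z x₂, x₁⟫_ℂ
  set F := conj a • Y + conj b • adjoint Z
  have hF : ‖⟪Y x₂, x₁⟫_ℂ + ⟪Z x₁, x₂⟫_ℂ‖ ≤ ‖F x₂‖ * ‖x₁‖ := calc
    _ ≤ ‖⟪Y x₂, x₁⟫_ℂ‖ + ‖⟪adjoint Z x₂, x₁⟫_ℂ‖ := by
        rw [adjoint_inner_left, norm_inner_symm x₂]; exact norm_add_le _ _
    _ = ‖⟪F x₂, x₁⟫_ℂ‖ := by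
        have : ⟪F x₂, x₁⟫_ℂ = (‖⟪Y x₂, x₁⟫_ℂ‖ + ‖⟪adjoint Z x₂, x₁⟫_ℂ‖ : ℝ) := by
          simp [F, hau, hbv, mul_comm]
        rw [this, Complex.norm_real, Real.norm_of_nonneg (by positivity)]
    _ ≤ ‖F x₂‖ * ‖x₁‖ := norm_inner_le_norm _ _
  have hFF : ‖F x₂‖ ^ 2 ≤ ‖(adjoint F ∘L F) x₂‖ * ‖x₂‖ := by
    rw [apply_norm_sq_eq_inner_adjoint_left]
    exact (RCLike.re_le_norm _).trans (norm_inner_le_norm _ _)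
  have hSa : IsSelfAdjoint S :=
    hS ▸ (IsSelfAdjoint.star_mul_self Y).add (IsSelfAdjoint.mul_star_self Z)
  have hG := norm_add_smul_add_conj_smul_adjoint_apply_sq_le hSa
    (c := conj (conj b) * conj a) (by simp [ha, hb]) (Z ∘L Y) x₂
  rw [hS, ← adjoint_comp_self_smul_add_smul_adjoint (by simpa using ha) (by simpa using hb), ← hS]
    at hG
  calc ‖⟪Y x₂, x₁⟫_ℂ + ⟪Z x₁, x₂⟫_ℂ‖ ^ 4 ≤ (‖F x₂‖ ^ 2) ^ 2 * (‖x₁‖ ^ 2) ^ 2 := by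
        rw [← mul_pow, ← mul_pow, ← pow_mul]; gcongr
    _ ≤ (‖(adjoint F ∘L F) x₂‖ * ‖x₂‖) ^ 2 * (‖x₁‖ ^ 2) ^ 2 := by gcongr
    _ = ‖(adjoint F ∘L F) x₂‖ ^ 2 * ‖x₂‖ ^ 2 * (‖x₁‖ ^ 2) ^ 2 := by ring
    _ ≤ (_ * ‖x₂‖ ^ 2) * ‖x₂‖ ^ 2 * (‖x₁‖ ^ 2) ^ 2 := by gcongr
    _ = _ := by ring

lemma norm_inner_add_inner_le_rpow (Y Z S : H →L[ℂ] H)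
    (hS : S = adjoint Y ∘L Y + Z ∘L adjoint Z) {x₁ x₂ : H} (hx : ‖x₁‖ ^ 2 + ‖x₂‖ ^ 2 = 1) :
    ‖⟪Y x₂, x₁⟫_ℂ + ⟪Z x₁, x₂⟫_ℂ‖ ≤
      ((1 / 16 : ℝ) * ‖S‖ ^ 2 + (1 / 4 : ℝ) * (numRadius (Z ∘L Y)) ^ 2
        + (1 / 8 : ℝ) * numRadius ((Z ∘L Y) ∘L S + S ∘L (Z ∘L Y))) ^ ((1 : ℝ) / 4) := by
  have hP := numRadius_nonneg (Z ∘L Y)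
  have hN := numRadius_nonneg ((Z ∘L Y) ∘L S + S ∘L (Z ∘L Y))
  have hprod : ‖x₁‖ ^ 2 * ‖x₂‖ ^ 2 ≤ 1 / 4 := by nlinarith [sq_nonneg (‖x₁‖ ^ 2 - ‖x₂‖ ^ 2)]
  rw [one_div (4 : ℝ), Real.le_rpow_inv_iff_of_pos (norm_nonneg _) (by positivity) four_pos,
    Real.rpow_ofNat]
  calc _ ≤ _ := norm_inner_add_inner_pow_four_le Y Z S hS x₁ x₂
    _ ≤ (‖S‖ ^ 2 + 4 * numRadius (Z ∘L Y) ^ 2 + 2 * numRadius ((Z ∘L Y) ∘L S + S ∘L (Z ∘L Y))) *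
        (1 / 4) ^ 2 := by gcongr
    _ = _ := by ring

end OffDiagonal

theorem numRadius_operator_matrix_upper
    {H : Type*} [NormedAddCommGroup H] [InnerProductSpace ℂ H] [CompleteSpace H]
    (X Y Z W : H →L[ℂ] H)
    (T : WithLp 2 (H × H) →L[ℂ] WithLp 2 (H × H))
    (hT : ∀ x : WithLp 2 (H × H),
      WithLp.equiv 2 (H × H) (T x) =
        (X (WithLp.equiv 2 (H × H) x).1 + Y (WithLp.equiv 2 (H × H) x).2,
         Z (WithLp.equiv 2 (H × H) x).1 + W (WithLp.equiv 2 (H × H) x).2))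
    (S : H →L[ℂ] H)
    (hS : S = (ContinuousLinearMap.adjoint Y).comp Y + Z.comp (ContinuousLinearMap.adjoint Z)) :
    numRadius T ≤ max (numRadius X) (numRadius W) +
      ((1 / 16 : ℝ) * ‖S‖ ^ 2 + (1 / 4 : ℝ) * (numRadius (Z.comp Y)) ^ 2
        + (1 / 8 : ℝ) * numRadius ((Z.comp Y).comp S + S.comp (Z.comp Y))) ^ ((1 : ℝ) / 4) := by
  refine numRadius_le (add_nonneg ((numRadius_nonneg X).trans (le_max_left _ _))
    (Real.rpow_nonneg ?_ _)) fun x hx ↦ ?_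
  · have := numRadius_nonneg (Z ∘L Y)
    have := numRadius_nonneg ((Z ∘L Y) ∘L S + S ∘L (Z ∘L Y))
    positivity
  set x₁ := (WithLp.equiv 2 (H × H) x).1
  set x₂ := (WithLp.equiv 2 (H × H) x).2
  have hnorm : ‖x₁‖ ^ 2 + ‖x₂‖ ^ 2 = 1 := by
    have := WithLp.prod_norm_sq_eq_of_L2 x
    rw [hx, one_pow] at this
    exact this.symm
  have hinner : ⟪T x, x⟫_ℂ = (⟪X x₁, x₁⟫_ℂ + ⟪W x₂, x₂⟫_ℂ) + (⟪Y x₂, x₁⟫_ℂ + ⟪Z x₁, x₂⟫_ℂ) := by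
    rw [WithLp.prod_inner_apply]
    change ⟪(WithLp.equiv 2 (H × H) (T x)).1, x₁⟫_ℂ + ⟪(WithLp.equiv 2 (H × H) (T x)).2, x₂⟫_ℂ = _
    rw [hT, inner_add_left, inner_add_left]
    ring
  rw [hinner]
  exact (norm_add_le _ _).trans (add_le_add (norm_inner_add_inner_le_max X W hnorm)
    (norm_inner_add_inner_le_rpow Y Z S hS hnorm))
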